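/- (Smoothing bilinear estimate for the Euler nonlinearity) Let s ≥ s₀ and n ≥ 1 an integer. For v₁, v₂ ∈ H^s_0(𝕋^{d+2}) define the bilinear map N(v₁,v₂) := (∇_⊥(−Δ)^{−1}v₁) · ∇v₂. Then N(v₁,v₂) has zero average in x, and ‖(−Δ)^{−n/2} N(v₁, v₂)‖_s ≤ C(s) ‖v₁‖_s ‖v₂‖_s for all v₁, v₂ ∈ H^s_0. -/

import Mathlib

open scoped BigOperators ENNReal
open MeasureTheory Filter

noncomputable section

/-- Frequency lattice `ℤ^d`. -/
abbrev Zd (d : ℕ) := Fin d → ℤ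
/-- Frequency lattice `ℤ²`. -/
abbrev Z2 := Fin 2 → ℤ
/-- Full frequency lattice `ℤ^d × ℤ²` of `𝕋^d × 𝕋²`. -/
abbrev Freq (d : ℕ) := Zd d × Z2
/-- A function on `𝕋^d × 𝕋²`, identified with its Fourier coefficients. -/
abbrev Fn (d : ℕ) := Freq d → ℂ
/-- The parameter space `ℝ^d × ℝ²` of `λ = (ω, ζ)`. -/
abbrev Param (d : ℕ) := (Fin d → ℝ) × (Fin 2 → ℝ)
/-- A linear operator identified with its matrix coefficients `R̂(ℓ)_j^{j'}`. -/
abbrev OpCoef (d : ℕ) := Zd d → Z2 → Z2 → ℂ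

/-- Coercion `ℝ → ℂ`. -/
def cR (x : ℝ) : ℂ := (x : ℂ)

/-- Euclidean norm `|ℓ|` of `ℓ ∈ ℤ^d`. -/
def lnorm {d : ℕ} (ℓ : Zd d) : ℝ := Real.sqrt (∑ i, ((ℓ i : ℝ)) ^ 2)
/-- Euclidean norm `|j|` of `j ∈ ℤ²`. -/
def jnorm (j : Z2) : ℝ := Real.sqrt (((j 0 : ℝ)) ^ 2 + ((j 1 : ℝ)) ^ 2)
/-- `⟨ℓ⟩ := max{1, |ℓ|}`. -/
def lwt {d : ℕ} (ℓ : Zd d) : ℝ := max 1 (lnorm ℓ)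
/-- `⟨j⟩ := max{1, |j|}`. -/
def jwt (j : Z2) : ℝ := max 1 (jnorm j)
/-- `⟨ℓ, j⟩ := max{1, |ℓ|, |j|}`. -/
def wt {d : ℕ} (ℓ : Zd d) (j : Z2) : ℝ := max 1 (max (lnorm ℓ) (jnorm j))

/-- Pairing `x · k` of a real vector with a lattice vector. -/
def dotP {n : ℕ} (x : Fin n → ℝ) (k : Fin n → ℤ) : ℝ := ∑ i, x i * (k i : ℝ)

/-- The fixed Sobolev threshold `s₀ := ⌊(d+2)/2⌋ + 2`. -/
def s0 (d : ℕ) : ℝ := (((d + 2) / 2 : ℕ) : ℝ) + 2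

/-- The Sobolev norm `‖u‖_s` (valued in `ℝ≥0∞`). -/
def sobNorm {d : ℕ} (s : ℝ) (u : Fn d) : ℝ≥0∞ :=
  (∑' p : Freq d, ENNReal.ofReal (wt p.1 p.2 ^ (2 * s)) * (‖u p‖₊ : ℝ≥0∞) ^ 2) ^ ((1 : ℝ) / 2)

/-- Zero average in the space variable `x`: membership in `H^s_0` (Fourier side). -/
def zeroAvg {d : ℕ} (u : Fn d) : Prop := ∀ ℓ : Zd d, u (ℓ, 0) = 0

/-- The weighted Lipschitz Sobolev norm `‖u‖_s^{Lip(γ)}` of a family `λ ↦ u(λ)`. -/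
def lipSob {d : ℕ} (γ s : ℝ) (Λ : Set (Param d)) (u : Param d → Fn d) : ℝ≥0∞ :=
  (⨆ lam ∈ Λ, sobNorm s (u lam)) +
    ENNReal.ofReal γ *
      ⨆ (l1 : Λ) (l2 : Λ) (_ : l1 ≠ l2),
        sobNorm (s - 1) (fun p => u (↑l1) p - u (↑l2) p) / edist (l1 : Param d) (l2 : Param d)

/-- The decay norm `|R|_{m,s}` of an operator (valued in `ℝ≥0∞`). -/
def decayNorm {d : ℕ} (m s : ℝ) (R : OpCoef d) : ℝ≥0∞ :=
  ⨆ j' : Z2, ENNReal.ofReal (jwt j' ^ (-m)) *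
    (∑' p : Freq d,
      ENNReal.ofReal (wt p.1 (p.2 - j') ^ (2 * s)) * (‖R p.1 p.2 j'‖₊ : ℝ≥0∞) ^ 2) ^ ((1 : ℝ) / 2)

/-- Difference of two operators. -/
def opSub {d : ℕ} (R Q : OpCoef d) : OpCoef d := fun ℓ j j' => R ℓ j j' - Q ℓ j j'

/-- The weighted Lipschitz decay norm `|R|_{m,s}^{Lip(γ)}` of a family `λ ↦ R(λ)`. -/
def lipDecay {d : ℕ} (γ m s : ℝ) (Λ : Set (Param d)) (R : Param d → OpCoef d) : ℝ≥0∞ :=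
  (⨆ lam ∈ Λ, decayNorm m s (R lam)) +
    ENNReal.ofReal γ *
      ⨆ (l1 : Λ) (l2 : Λ) (_ : l1 ≠ l2),
        decayNorm m (s - 1) (opSub (R ↑l1) (R ↑l2)) / edist (l1 : Param d) (l2 : Param d)

/-- The weighted Lipschitz norm `|q|^{Lip(γ)}` of a scalar family `λ ↦ q(λ)`. -/
def lipC {d : ℕ} (γ : ℝ) (Λ : Set (Param d)) (g : Param d → ℂ) : ℝ≥0∞ :=
  (⨆ lam ∈ Λ, (‖g lam‖₊ : ℝ≥0∞)) +
    ENNReal.ofReal γ *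
      ⨆ (l1 : Λ) (l2 : Λ) (_ : l1 ≠ l2),
        (‖g ↑l1 - g ↑l2‖₊ : ℝ≥0∞) / edist (l1 : Param d) (l2 : Param d)

/-- Action of an operator on a function. -/
def opApply {d : ℕ} (R : OpCoef d) (u : Fn d) : Fn d :=
  fun p => ∑' q : Freq d, R (p.1 - q.1) p.2 q.2 * u q

/-- Composition of operators (matrix product). -/
def opMul {d : ℕ} (R Q : OpCoef d) : OpCoef d :=
  fun ℓ j j' => ∑' k : Freq d, R (ℓ - k.1) j k.2 * Q k.1 k.2 j'

/-- The identity operator. -/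
def idOp {d : ℕ} : OpCoef d := fun ℓ j j' => if ℓ = 0 ∧ j = j' then 1 else 0

/-- Sum of two operators. -/
def opAdd {d : ℕ} (R Q : OpCoef d) : OpCoef d := fun ℓ j j' => R ℓ j j' + Q ℓ j j'

/-- The diagonal part `D_R` of an operator. -/
def diagPart {d : ℕ} (R : OpCoef d) : OpCoef d :=
  fun ℓ j j' => if ℓ = 0 ∧ j = j' then R 0 j j else 0

/-- Powers `R^n` of an operator. -/
def opPow {d : ℕ} (R : OpCoef d) : ℕ → OpCoef d
  | 0 => idOp
  | n + 1 => opMul R (opPow R n)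

/-- The smoothing truncation `Π_N` on functions. -/
def truncF {d : ℕ} (N : ℝ) (u : Fn d) : Fn d :=
  fun p => if wt p.1 p.2 ≤ N then u p else 0

/-- The truncation `Π_N` on operators. -/
def truncOp {d : ℕ} (N : ℝ) (R : OpCoef d) : OpCoef d :=
  fun ℓ j j' => if lnorm ℓ ≤ N ∧ jnorm (j - j') ≤ N then R ℓ j j' else 0

/-- Product of functions (convolution of Fourier coefficients). -/
def mulF {d : ℕ} (u v : Fn d) : Fn d :=
  fun p => ∑' q : Freq d, u q * v (p.1 - q.1, p.2 - q.2)

/-- The multiplication operator `M_a` by a function `a`. -/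
def mulOp {d : ℕ} (a : Fn d) : OpCoef d := fun ℓ j j' => a (ℓ, j - j')

/-- `ξ₁^⊥ · ξ₂` with `ξ^⊥ := (−ξ₂, ξ₁)`. -/
def perpDot (x y : Z2) : ℤ := (-(x 1)) * y 0 + x 0 * y 1
/-- `|j|²` for `j ∈ ℤ²`. -/
def nsq (j : Z2) : ℤ := j 0 ^ 2 + j 1 ^ 2

/-- Fourier multiplier of the bilinear map `(v,w) ↦ (∇_⊥(−Δ)^{−1}v)·∇w`. -/
def emult (x y : Z2) : ℂ :=
  if x = 0 then 0 else Complex.I * (perpDot x y : ℂ) / (nsq x : ℂ)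

/-- The Euler nonlinearity `N(v,w) = (∇_⊥(−Δ)^{−1}v)·∇w` in Fourier coefficients. -/
def eulerN {d : ℕ} (v w : Fn d) : Fn d :=
  fun p => ∑' q : Freq d, emult q.2 (p.2 - q.2) * v q * w (p.1 - q.1, p.2 - q.2)

/-- Coefficient-wise formulation of the (forced, rescaled) Navier–Stokes vorticity
equation `ω·∂_φ v + ζ·∇v − νΔv + ε(Π₀^⊥(u·∇v) − F) = 0`, `u = ∇_⊥(−Δ)^{−1}v`,
on zero-average functions.  For `ν = 0` this is the Euler equation. -/
def SolvesNS {d : ℕ} (ω : Fin d → ℝ) (ζ : Fin 2 → ℝ) (ν ε : ℝ) (F v : Fn d) : Prop :=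
  ∀ p : Freq d, p.2 ≠ 0 →
    (Complex.I * cR (dotP ω p.1 + dotP ζ p.2) + cR (ν * ((nsq p.2 : ℤ) : ℝ))) * v p
      + cR ε * (eulerN v v p - F p) = 0

/-- Fourier coefficients of `F = ∇ × f = ∂_{x₁} f₂ − ∂_{x₂} f₁`. -/
def curlC {d : ℕ} (fh : Freq d → Fin 2 → ℂ) : Fn d :=
  fun p => Complex.I * (((p.2 0 : ℤ) : ℂ) * fh p 1 - ((p.2 1 : ℤ) : ℂ) * fh p 0)

/-- The set `Λ(γ,τ)` of Diophantine parameters in `Λ`. -/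
def dioSet {d : ℕ} (Λ : Set (Param d)) (γ τ : ℝ) : Set (Param d) :=
  {lam | lam ∈ Λ ∧ ∀ (ℓ : Zd d) (j : Z2), ¬(ℓ = 0 ∧ j = 0) →
    γ / (lnorm ℓ + jnorm j) ^ τ ≤ |dotP lam.1 ℓ + dotP lam.2 j|}

/-- The KAM scales `N_{n-1}` (so `Nm1 N0 0 = N_{-1} = 1` and
`Nm1 N0 (n+1) = N_n = N_0^{(3/2)^n}`). -/
def Nm1 (N0 : ℝ) : ℕ → ℝ := fun n => if n = 0 then 1 else N0 ^ (((3 : ℝ) / 2) ^ (n - 1))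

/-!
The multiplier of `N` satisfies `|ξ₁^⊥ · ξ₂| / |ξ₁|² = |ξ₁^⊥ · (ξ₁ + ξ₂)| / |ξ₁|² ≤ |ξ₁ + ξ₂|`
(Cauchy–Schwarz and `|ξ₁| ≥ 1`), and `|ξ| ≤ |ξ|ⁿ` on `ℤ² ∖ {0}`. Hence every Fourier coefficient
of `(−Δ)^{−n/2} N(v₁, v₂)` is bounded by the convolution `|v̂₁| * |v̂₂|`; the zero average comes
from the multiplier vanishing at `ξ₂ = −ξ₁`.

It remains to see that `H^s` is an algebra for `s > (d + 2)/2`. With `m(p) = ⟨p⟩^s`,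
`m(p) ≤ 2^{s−1} (m(q) + m(p − q)) = 2^{s−1} m(q) m(p − q) (m(p − q)⁻¹ + m(q)⁻¹)`, so
Cauchy–Schwarz in `q` followed by Fubini gives
`‖|v̂₁| * |v̂₂|‖_s ≤ 2^s (∑_p m(p)⁻²)^{1/2} ‖v₁‖_s ‖v₂‖_s`. The sum is finite since `⟨p⟩^{d+2}`
dominates `∏ᵢ max(1, |pᵢ|)` over the `d + 2` coordinates of `p`.
-/

theorem ENNReal.tsum_mul_sq_le {α : Type*} (f g : α → ℝ≥0∞) :
    (∑' i, f i * g i) ^ 2 ≤ (∑' i, f i ^ 2) * ∑' i, g i ^ 2 := by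
  let _ : MeasurableSpace α := ⊤
  have h := ENNReal.lintegral_mul_le_Lp_mul_Lq (Measure.count : Measure α)
    Real.HolderConjugate.two_two (measurable_from_top (f := f)).aemeasurable
    (measurable_from_top (f := g)).aemeasurable
  simp only [lintegral_count, ENNReal.rpow_two, Pi.mul_apply] at h
  calc (∑' i, f i * g i) ^ 2
      ≤ ((∑' i, f i ^ 2) ^ (1 / 2 : ℝ) * (∑' i, g i ^ 2) ^ (1 / 2 : ℝ)) ^ 2 := by gcongr
    _ = (∑' i, f i ^ 2) * ∑' i, g i ^ 2 := by
      rw [mul_pow, ← ENNReal.rpow_natCast, ← ENNReal.rpow_natCast (_ ^ _), ← ENNReal.rpow_mul,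
        ← ENNReal.rpow_mul]
      norm_num

theorem ENNReal.add_sq_le (x y : ℝ≥0∞) : (x + y) ^ 2 ≤ 2 * (x ^ 2 + y ^ 2) := by
  have h := ENNReal.rpow_add_le_mul_rpow_add_rpow x y (one_le_two : (1 : ℝ) ≤ 2)
  rwa [ENNReal.rpow_two, ENNReal.rpow_two, ENNReal.rpow_two, show (2 : ℝ) - 1 = 1 by norm_num,
    ENNReal.rpow_one] at h

theorem ENNReal.add_eq_mul_mul_inv_add_inv {x y : ℝ≥0∞} (hx₀ : x ≠ 0) (hx : x ≠ ⊤)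
    (hy₀ : y ≠ 0) (hy : y ≠ ⊤) : x + y = x * y * (y⁻¹ + x⁻¹) := by
  rw [mul_add, mul_assoc, ENNReal.mul_inv_cancel hy₀ hy, mul_right_comm,
    ENNReal.mul_inv_cancel hx₀ hx, mul_one, one_mul]

theorem ENNReal.sq_rpow_half (x : ℝ≥0∞) : (x ^ 2) ^ (1 / 2 : ℝ) = x := by
  rw [← ENNReal.rpow_natCast, ← ENNReal.rpow_mul]
  norm_num

section WeightedConvolution

variable {G : Type*}

def weightedL2Norm (m a : G → ℝ≥0∞) : ℝ≥0∞ := (∑' p, (m p * a p) ^ 2) ^ (1 / 2 : ℝ)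

theorem weightedL2Norm_mono (m : G → ℝ≥0∞) {a b : G → ℝ≥0∞} (h : ∀ p, a p ≤ b p) :
    weightedL2Norm m a ≤ weightedL2Norm m b := by
  unfold weightedL2Norm
  gcongr with p
  exact h p

variable [AddGroup G]

def seqConv (a b : G → ℝ≥0∞) (p : G) : ℝ≥0∞ := ∑' q, a q * b (p - q)

theorem tsum_sub_left_eq (p : G) (g : G → ℝ≥0∞) : ∑' q, g (p - q) = ∑' q, g q :=
  (Equiv.subLeft p).tsum_eq g

theorem tsum_tsum_mul_sub_eq (f g : G → ℝ≥0∞) :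
    ∑' p, ∑' q, f q * g (p - q) = (∑' q, f q) * ∑' p, g p := by
  rw [ENNReal.tsum_comm, ← ENNReal.tsum_mul_right]
  refine tsum_congr fun q => ?_
  rw [ENNReal.tsum_mul_left]
  exact congrArg (f q * ·) ((Equiv.subRight q).tsum_eq g)

variable {m : G → ℝ≥0∞} {C : ℝ≥0∞}

theorem sq_mul_seqConv_le (hm₀ : ∀ p, m p ≠ 0) (hm : ∀ p, m p ≠ ⊤)
    (hC : ∀ p q, m p ≤ C * (m q + m (p - q))) (a b : G → ℝ≥0∞) (p : G) :
    (m p * seqConv a b p) ^ 2 ≤ 4 * C ^ 2 * (∑' q, (m q)⁻¹ ^ 2) *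
      ∑' q, (m q * a q) ^ 2 * (m (p - q) * b (p - q)) ^ 2 := by
  set A : G → ℝ≥0∞ := fun q => (m q * a q) * (m (p - q) * b (p - q))
  set V : G → ℝ≥0∞ := fun q => (m (p - q))⁻¹ + (m q)⁻¹
  have hterm : ∀ q, m p * (a q * b (p - q)) ≤ C * (A q * V q) := fun q => calc
    m p * (a q * b (p - q)) ≤ C * (m q + m (p - q)) * (a q * b (p - q)) := by gcongr; exact hC p q
    _ = C * (A q * V q) := by
      rw [ENNReal.add_eq_mul_mul_inv_add_inv (hm₀ q) (hm q) (hm₀ _) (hm _)]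
      ring
  have hV : ∑' q, V q ^ 2 ≤ 4 * ∑' q, (m q)⁻¹ ^ 2 := calc
    ∑' q, V q ^ 2 ≤ ∑' q, 2 * ((m (p - q))⁻¹ ^ 2 + (m q)⁻¹ ^ 2) :=
      ENNReal.tsum_le_tsum fun q => ENNReal.add_sq_le _ _
    _ = 4 * ∑' q, (m q)⁻¹ ^ 2 := by
      rw [ENNReal.tsum_mul_left, ENNReal.tsum_add,
        tsum_sub_left_eq p fun q => (m q)⁻¹ ^ 2, ← two_mul, ← mul_assoc]
      norm_num
  calc (m p * seqConv a b p) ^ 2 = (∑' q, m p * (a q * b (p - q))) ^ 2 := by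
        rw [seqConv, ENNReal.tsum_mul_left]
    _ ≤ (C * ∑' q, A q * V q) ^ 2 := by
        rw [← ENNReal.tsum_mul_left]
        gcongr ?_ ^ 2
        exact ENNReal.tsum_le_tsum hterm
    _ ≤ C ^ 2 * ((∑' q, A q ^ 2) * ∑' q, V q ^ 2) := by
        rw [mul_pow]
        gcongr
        exact ENNReal.tsum_mul_sq_le A V
    _ ≤ C ^ 2 * ((∑' q, A q ^ 2) * (4 * ∑' q, (m q)⁻¹ ^ 2)) := by gcongr
    _ = 4 * C ^ 2 * (∑' q, (m q)⁻¹ ^ 2) * ∑' q, A q ^ 2 := by ring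
    _ = _ := by simp only [A, mul_pow]

theorem weightedL2Norm_seqConv_le (hm₀ : ∀ p, m p ≠ 0) (hm : ∀ p, m p ≠ ⊤)
    (hC : ∀ p q, m p ≤ C * (m q + m (p - q))) (a b : G → ℝ≥0∞) :
    weightedL2Norm m (seqConv a b) ≤
      2 * C * (∑' q, (m q)⁻¹ ^ 2) ^ (1 / 2 : ℝ) * weightedL2Norm m a * weightedL2Norm m b := by
  have hsum : ∑' p, (m p * seqConv a b p) ^ 2 ≤
      (2 * C) ^ 2 * (∑' q, (m q)⁻¹ ^ 2) * ((∑' q, (m q * a q) ^ 2) * ∑' q, (m q * b q) ^ 2) := calc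
    ∑' p, (m p * seqConv a b p) ^ 2 ≤ ∑' p, 4 * C ^ 2 * (∑' q, (m q)⁻¹ ^ 2) *
        ∑' q, (m q * a q) ^ 2 * (m (p - q) * b (p - q)) ^ 2 :=
      ENNReal.tsum_le_tsum (sq_mul_seqConv_le hm₀ hm hC a b)
    _ = _ := by
      rw [ENNReal.tsum_mul_left, tsum_tsum_mul_sub_eq (fun q => (m q * a q) ^ 2)
        (fun q => (m q * b q) ^ 2)]
      ring
  refine (ENNReal.rpow_le_rpow hsum (by norm_num)).trans_eq ?_
  simp only [weightedL2Norm, ENNReal.mul_rpow_of_nonneg _ _ (by norm_num : (0 : ℝ) ≤ 1 / 2),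
    ENNReal.sq_rpow_half]
  ring

end WeightedConvolution

theorem ENNReal.tsum_fin_pi_prod {α : Type*} (f : α → ℝ≥0∞) :
    ∀ n : ℕ, ∑' x : Fin n → α, ∏ i, f (x i) = (∑' k, f k) ^ n
  | 0 => by simp
  | n + 1 => by
    rw [← (Fin.consEquiv fun _ => α).tsum_eq, pow_succ', ← ENNReal.tsum_fin_pi_prod f n,
      ← ENNReal.tsum_mul_right, ENNReal.tsum_prod']
    refine tsum_congr fun a => ?_
    rw [← ENNReal.tsum_mul_left]
    simp [Fin.prod_univ_succ, Fin.consEquiv]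

theorem summable_max_one_abs_rpow_neg {t : ℝ} (ht : 1 < t) :
    Summable fun k : ℤ => max 1 |(k : ℝ)| ^ (-t) := by
  refine (Real.summable_abs_int_rpow ht).of_norm_bounded_eventually ?_
  filter_upwards [eventually_cofinite_ne 0] with k hk
  have hk : (1 : ℝ) ≤ |(k : ℝ)| := by exact_mod_cast Int.one_le_abs hk
  rw [max_eq_right hk, Real.norm_of_nonneg (by positivity)]

section FrequencyWeight

variable {d : ℕ}

theorem lnorm_eq_norm (ℓ : Zd d) :
    lnorm ℓ = ‖WithLp.toLp 2 (fun i => (ℓ i : ℝ))‖ := by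
  simp [lnorm, EuclideanSpace.norm_eq]

theorem jnorm_eq_lnorm (j : Z2) : jnorm j = lnorm j := by
  simp [jnorm, lnorm, Fin.sum_univ_two]

theorem lnorm_add_le (ℓ ℓ' : Zd d) : lnorm (ℓ + ℓ') ≤ lnorm ℓ + lnorm ℓ' := by
  simp only [lnorm_eq_norm, Pi.add_apply, Int.cast_add]
  exact norm_add_le (WithLp.toLp 2 fun i => (ℓ i : ℝ)) (WithLp.toLp 2 fun i => (ℓ' i : ℝ))

theorem jnorm_add_le (j j' : Z2) : jnorm (j + j') ≤ jnorm j + jnorm j' := by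
  simpa only [jnorm_eq_lnorm] using lnorm_add_le j j'

theorem abs_le_lnorm (ℓ : Zd d) (i : Fin d) : |(ℓ i : ℝ)| ≤ lnorm ℓ := by
  rw [lnorm, ← Real.sqrt_sq_eq_abs]
  exact Real.sqrt_le_sqrt
    (Finset.single_le_sum (fun i _ => sq_nonneg (ℓ i : ℝ)) (Finset.mem_univ i))

theorem one_le_wt (ℓ : Zd d) (j : Z2) : 1 ≤ wt ℓ j := le_max_left _ _

theorem wt_pos (ℓ : Zd d) (j : Z2) : 0 < wt ℓ j := one_pos.trans_le (one_le_wt ℓ j)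

theorem lnorm_le_wt (ℓ : Zd d) (j : Z2) : lnorm ℓ ≤ wt ℓ j :=
  (le_max_left _ _).trans (le_max_right _ _)

theorem jnorm_le_wt (ℓ : Zd d) (j : Z2) : jnorm j ≤ wt ℓ j :=
  (le_max_right _ _).trans (le_max_right _ _)

theorem wt_add_le (ℓ ℓ' : Zd d) (j j' : Z2) : wt (ℓ + ℓ') (j + j') ≤ wt ℓ j + wt ℓ' j' := by
  have h₁ := one_le_wt ℓ j
  have h₂ := one_le_wt ℓ' j'
  refine max_le (by linarith) (max_le ?_ ?_)
  · exact (lnorm_add_le ℓ ℓ').trans (add_le_add (lnorm_le_wt ℓ j) (lnorm_le_wt ℓ' j'))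
  · exact (jnorm_add_le j j').trans (add_le_add (jnorm_le_wt ℓ j) (jnorm_le_wt ℓ' j'))

theorem prod_max_one_abs_le_wt_pow (ℓ : Zd d) (j : Z2) :
    (∏ i, max 1 |(ℓ i : ℝ)|) * ∏ i, max 1 |(j i : ℝ)| ≤ wt ℓ j ^ (d + 2) := by
  have hcoord : ∀ {n} (k : Fin n → ℤ), lnorm k ≤ wt ℓ j →
      ∏ i, max 1 |(k i : ℝ)| ≤ wt ℓ j ^ n := fun k hk => calc
    ∏ i, max 1 |(k i : ℝ)| ≤ ∏ _i : Fin _, wt ℓ j := by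
      gcongr with i
      exact max_le (one_le_wt ℓ j) ((abs_le_lnorm k i).trans hk)
    _ = wt ℓ j ^ _ := by simp
  rw [pow_add]
  exact mul_le_mul (hcoord ℓ (lnorm_le_wt ℓ j)) (hcoord j (jnorm_eq_lnorm j ▸ jnorm_le_wt ℓ j))
    (by positivity) (pow_nonneg (wt_pos ℓ j).le _)

theorem wt_rpow_neg_le_prod {r : ℝ} (hr : 0 ≤ r) (ℓ : Zd d) (j : Z2) :
    wt ℓ j ^ (-r) ≤ (∏ i, max 1 |(ℓ i : ℝ)| ^ (-(r / (d + 2)))) *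
      ∏ i, max 1 |(j i : ℝ)| ^ (-(r / (d + 2))) := by
  rw [Real.finsetProd_rpow _ _ (fun _ _ => by positivity),
    Real.finsetProd_rpow _ _ (fun _ _ => by positivity),
    ← Real.mul_rpow (by positivity) (by positivity)]
  calc wt ℓ j ^ (-r) = (wt ℓ j ^ (d + 2)) ^ (-(r / (d + 2))) := by
        rw [← Real.rpow_natCast, ← Real.rpow_mul (wt_pos ℓ j).le]
        congr 1
        push_cast
        field_simp
    _ ≤ _ := Real.rpow_le_rpow_of_nonpos (by positivity) (prod_max_one_abs_le_wt_pow ℓ j)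
        (neg_nonpos.2 (by positivity))

theorem tsum_ofReal_wt_rpow_neg_ne_top {r : ℝ} (hr : (d : ℝ) + 2 < r) :
    ∑' p : Freq d, ENNReal.ofReal (wt p.1 p.2) ^ (-r) ≠ ⊤ := by
  set t := r / (d + 2)
  have ht : 1 < t := (one_lt_div (by positivity)).2 hr
  set f : ℤ → ℝ≥0∞ := fun k => ENNReal.ofReal (max 1 |(k : ℝ)| ^ (-t))
  have hf : ∑' k, f k ≠ ⊤ := by
    rw [← ENNReal.ofReal_tsum_of_nonneg (fun k => by positivity)
      (summable_max_one_abs_rpow_neg ht)]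
    exact ENNReal.ofReal_ne_top
  have hle : ∀ p : Freq d,
      ENNReal.ofReal (wt p.1 p.2) ^ (-r) ≤ (∏ i, f (p.1 i)) * ∏ i, f (p.2 i) := by
    intro p
    rw [ENNReal.ofReal_rpow_of_pos (wt_pos p.1 p.2),
      ← ENNReal.ofReal_prod_of_nonneg (fun _ _ => by positivity),
      ← ENNReal.ofReal_prod_of_nonneg (fun _ _ => by positivity),
      ← ENNReal.ofReal_mul (Finset.prod_nonneg fun _ _ => by positivity)]
    exact ENNReal.ofReal_le_ofReal
      (wt_rpow_neg_le_prod (by linarith [d.cast_nonneg (α := ℝ)]) p.1 p.2)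
  refine ne_top_of_le_ne_top ?_ (ENNReal.tsum_le_tsum hle)
  rw [ENNReal.tsum_prod']
  simp only [ENNReal.tsum_mul_left, ENNReal.tsum_mul_right, ENNReal.tsum_fin_pi_prod]
  exact ENNReal.mul_ne_top (ENNReal.pow_ne_top hf) (ENNReal.pow_ne_top hf)

end FrequencyWeight

section SobolevAlgebra

variable {d : ℕ}

theorem sobNorm_eq_weightedL2Norm (s : ℝ) (u : Fn d) :
    sobNorm s u = weightedL2Norm (fun p : Freq d => ENNReal.ofReal (wt p.1 p.2) ^ s)
      (fun p => ‖u p‖₊) := by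
  unfold sobNorm weightedL2Norm
  congr 1
  refine tsum_congr fun p => ?_
  rw [mul_pow, ← ENNReal.rpow_natCast (_ ^ s), ← ENNReal.rpow_mul,
    ENNReal.ofReal_rpow_of_pos (wt_pos p.1 p.2), Nat.cast_ofNat, mul_comm s]

theorem exists_sobNorm_le_of_le_seqConv {s : ℝ} (hs : (d : ℝ) + 2 < 2 * s) :
    ∃ C : ℝ, 0 < C ∧ ∀ u v w : Fn d,
      (∀ p, (‖u p‖₊ : ℝ≥0∞) ≤ seqConv (fun q => ‖v q‖₊) (fun q => ‖w q‖₊) p) →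
        sobNorm s u ≤ ENNReal.ofReal C * sobNorm s v * sobNorm s w := by
  have hs₁ : 1 ≤ s := by linarith [d.cast_nonneg (α := ℝ)]
  set W : Freq d → ℝ≥0∞ := fun p => ENNReal.ofReal (wt p.1 p.2)
  have hm₀ : ∀ p, W p ^ s ≠ 0 := fun p =>
    (ENNReal.rpow_pos (ENNReal.ofReal_pos.2 (wt_pos p.1 p.2)) ENNReal.ofReal_ne_top).ne'
  have hm : ∀ p, W p ^ s ≠ ⊤ := fun p =>
    ENNReal.rpow_ne_top_of_nonneg (by linarith) ENNReal.ofReal_ne_top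
  have hC : ∀ p q, W p ^ s ≤ 2 ^ (s - 1) * (W q ^ s + W (p - q) ^ s) := fun p q => calc
    W p ^ s ≤ (W q + W (p - q)) ^ s := by
      gcongr
      rw [← ENNReal.ofReal_add (wt_pos _ _).le (wt_pos _ _).le]
      refine ENNReal.ofReal_le_ofReal ?_
      simpa using wt_add_le q.1 (p - q).1 q.2 (p - q).2
    _ ≤ 2 ^ (s - 1) * (W q ^ s + W (p - q) ^ s) := ENNReal.rpow_add_le_mul_rpow_add_rpow _ _ hs₁
  have hK : ∑' q, (W q ^ s)⁻¹ ^ 2 ≠ ⊤ := by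
    have h : ∀ q, (W q ^ s)⁻¹ ^ 2 = W q ^ (-(2 * s)) := fun q => by
      rw [← ENNReal.rpow_neg, ← ENNReal.rpow_natCast, ← ENNReal.rpow_mul]
      ring_nf
    rw [tsum_congr h]
    exact tsum_ofReal_wt_rpow_neg_ne_top hs
  set c : ℝ≥0∞ := 2 * 2 ^ (s - 1) * (∑' q, (W q ^ s)⁻¹ ^ 2) ^ (1 / 2 : ℝ)
  have hc : c ≠ ⊤ := by
    refine ENNReal.mul_ne_top (ENNReal.mul_ne_top (by simp) ?_) ?_
    · exact ENNReal.rpow_ne_top_of_nonneg (by linarith) (by simp)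
    · exact ENNReal.rpow_ne_top_of_nonneg (by norm_num) hK
  refine ⟨c.toReal + 1, by positivity, fun u v w huvw => ?_⟩
  simp only [sobNorm_eq_weightedL2Norm]
  calc weightedL2Norm (fun p => W p ^ s) (fun p => ‖u p‖₊)
      ≤ weightedL2Norm (fun p => W p ^ s) (seqConv (fun q => ‖v q‖₊) (fun q => ‖w q‖₊)) :=
        weightedL2Norm_mono _ huvw
    _ ≤ c * weightedL2Norm (fun p => W p ^ s) (fun q => ‖v q‖₊) *
          weightedL2Norm (fun p => W p ^ s) (fun q => ‖w q‖₊) :=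
        weightedL2Norm_seqConv_le hm₀ hm hC _ _
    _ ≤ _ := by
      gcongr
      exact (ENNReal.le_ofReal_iff_toReal_le hc (by positivity)).2 (by linarith)

end SobolevAlgebra

theorem emult_sub_self (x j : Z2) : emult x (j - x) = emult x j := by
  have : perpDot x (j - x) = perpDot x j := by
    simp only [perpDot, Pi.sub_apply]
    ring
  simp only [emult, this]

theorem zeroAvg_eulerN {d : ℕ} (v w : Fn d) : zeroAvg (eulerN v w) := by
  have h : ∀ x : Z2, emult x (-x) = 0 := fun x => by
    rw [← zero_sub, emult_sub_self]
    simp [emult, perpDot]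
  intro ℓ
  simp [eulerN, h]

theorem one_le_nsq {j : Z2} (hj : j ≠ 0) : (1 : ℝ) ≤ nsq j := by
  have h : j 0 ≠ 0 ∨ j 1 ≠ 0 := by
    by_contra! h
    exact hj (funext fun i => by fin_cases i <;> simp [h.1, h.2])
  have : (1 : ℤ) ≤ nsq j := by
    unfold nsq
    rcases h with h | h <;> nlinarith [Int.one_le_abs h, sq_abs (j 0), sq_abs (j 1)]
  exact_mod_cast this

theorem perpDot_sq_le (x j : Z2) : perpDot x j ^ 2 ≤ nsq x * nsq j := by
  unfold perpDot nsq
  nlinarith [sq_nonneg (x 0 * j 0 + x 1 * j 1)]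

theorem norm_emult_le (x j : Z2) : ‖emult x j‖ ≤ √(nsq j : ℝ) := by
  by_cases hx : x = 0
  · simp [emult, hx]
  have hN := one_le_nsq hx
  have hM : (0 : ℝ) ≤ nsq j := by exact_mod_cast (by unfold nsq; positivity : (0 : ℤ) ≤ nsq j)
  rw [emult, if_neg hx, norm_div, norm_mul, Complex.norm_I, one_mul, Complex.norm_intCast,
    Complex.norm_intCast, abs_of_pos (by linarith : (0 : ℝ) < nsq x),
    div_le_iff₀ (by linarith)]
  calc |(perpDot x j : ℝ)| ≤ √((nsq x : ℝ) * nsq j) :=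
        Real.abs_le_sqrt (by exact_mod_cast perpDot_sq_le x j)
    _ ≤ √((nsq x : ℝ) ^ 2 * nsq j) :=
        Real.sqrt_le_sqrt (mul_le_mul_of_nonneg_right (by nlinarith) hM)
    _ = √(nsq j : ℝ) * nsq x := by
        rw [Real.sqrt_mul (sq_nonneg _), Real.sqrt_sq (by linarith), mul_comm]

theorem norm_emult_sub_le_rpow {x j : Z2} (hj : j ≠ 0) {n : ℕ} (hn : 1 ≤ n) :
    ‖emult x (j - x)‖ ≤ (nsq j : ℝ) ^ ((n : ℝ) / 2) := by
  rw [emult_sub_self]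
  refine (norm_emult_le x j).trans ?_
  rw [Real.sqrt_eq_rpow]
  refine Real.rpow_le_rpow_of_exponent_le (one_le_nsq hj) ?_
  have : (1 : ℝ) ≤ n := by exact_mod_cast hn
  linarith

theorem enorm_eulerN_div_le {d n : ℕ} (hn : 1 ≤ n) (v w : Fn d) {p : Freq d} (hp : p.2 ≠ 0) :
    (‖eulerN v w p / cR ((nsq p.2 : ℝ) ^ ((n : ℝ) / 2))‖₊ : ℝ≥0∞) ≤
      seqConv (fun q => ‖v q‖₊) (fun q => ‖w q‖₊) p := by
  set D : ℝ := (nsq p.2 : ℝ) ^ ((n : ℝ) / 2)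
  have hD : 1 ≤ D := Real.one_le_rpow (one_le_nsq hp) (by positivity)
  rw [← enorm_eq_nnnorm, eulerN, ← tsum_div_const, seqConv]
  refine tsum_of_enorm_bounded ENNReal.summable.hasSum fun q => ?_
  rw [enorm_eq_nnnorm, ← ENNReal.coe_mul, ENNReal.coe_le_coe, ← NNReal.coe_le_coe]
  push_cast
  rw [norm_div, norm_mul, norm_mul, cR, Complex.norm_real, Real.norm_of_nonneg (by linarith),
    div_le_iff₀ (by linarith)]
  calc ‖emult q.2 (p.2 - q.2)‖ * ‖v q‖ * ‖w (p.1 - q.1, p.2 - q.2)‖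
      ≤ D * ‖v q‖ * ‖w (p.1 - q.1, p.2 - q.2)‖ := by
        gcongr
        simpa using norm_emult_sub_le_rpow (x := q.2) hp hn
    _ = ‖v q‖ * ‖w (p.1 - q.1, p.2 - q.2)‖ * D := by ring

theorem add_two_lt_two_mul_s0 (d : ℕ) : (d : ℝ) + 2 < 2 * s0 d := by
  have : d + 1 ≤ 2 * ((d + 2) / 2) := by omega
  have : (d : ℝ) + 1 ≤ 2 * ((d + 2) / 2 : ℕ) := by exact_mod_cast this
  unfold s0
  linarith

theorem euler_bilinear_smoothing_general (d : ℕ) :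
    ∀ s : ℝ, s0 d ≤ s → ∃ C : ℝ, 0 < C ∧
      ∀ n : ℕ, 1 ≤ n →
        ∀ v w : Fn d, zeroAvg v → zeroAvg w → sobNorm s v ≠ ⊤ → sobNorm s w ≠ ⊤ →
          zeroAvg (eulerN v w) ∧
          sobNorm s (fun p => if p.2 = 0 then 0 else
              eulerN v w p / cR (((nsq p.2 : ℤ) : ℝ) ^ ((n : ℝ) / 2))) ≤
            ENNReal.ofReal C * sobNorm s v * sobNorm s w := by
  intro s hs
  obtain ⟨C, hC, hbound⟩ :=
    exists_sobNorm_le_of_le_seqConv (d := d) ((add_two_lt_two_mul_s0 d).trans_le (by linarith))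
  refine ⟨C, hC, fun n hn v w _ _ _ _ => ⟨zeroAvg_eulerN v w, hbound _ v w fun p => ?_⟩⟩
  split_ifs with hp
  · simp
  · exact enorm_eulerN_div_le hn v w hp

/-- **Smoothing bilinear estimate for the Euler nonlinearity.** For
`s ≥ s₀` and any integer `n ≥ 1`, the bilinear map `N(v₁,v₂) = (∇_⊥(−Δ)^{−1}v₁)·∇v₂`
maps zero-average functions to zero-average functions and satisfies
`‖(−Δ)^{−n/2}N(v₁,v₂)‖_s ≤ C(s)‖v₁‖_s‖v₂‖_s`. -/
theorem euler_bilinear_smoothing (d : ℕ) (hd : 0 < d) :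
    ∀ s : ℝ, s0 d ≤ s → ∃ C : ℝ, 0 < C ∧
      ∀ n : ℕ, 1 ≤ n →
        ∀ v w : Fn d, zeroAvg v → zeroAvg w → sobNorm s v ≠ ⊤ → sobNorm s w ≠ ⊤ →
          zeroAvg (eulerN v w) ∧
          sobNorm s (fun p => if p.2 = 0 then 0 else
              eulerN v w p / cR (((nsq p.2 : ℤ) : ℝ) ^ ((n : ℝ) / 2))) ≤
            ENNReal.ofReal C * sobNorm s v * sobNorm s w :=
  euler_bilinear_smoothing_general d
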